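/- Assume R₀ := BᵀB + σ²·B̄ᵀB̄ is positive definite. Fix τ ∈ (0,1) and let S_{δ_τ} := {X symmetric n×n : X ⪰ δ_τ·I and Tr X = 1}. Then for every P ∈ S_{δ_τ}: (a) Tr Φ(P) ≤ C_A; (b) (1−τ)·Φ(P) + (τ/n)·I ⪰ (τ/n)·I and Tr((1−τ)·Φ(P) + (τ/n)·I) ≤ (1−τ)·C_A + τ; (c) consequently Φ̂_τ(P) ⪰ δ_τ·I and Tr Φ̂_τ(P) = 1, i.e., Φ̂_τ maps S_{δ_τ} into itself. -/

import Mathlib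

open Matrix MeasureTheory ProbabilityTheory
open scoped ENNReal Classical

noncomputable section

namespace SCS

/-! ### Matrix-analytic definitions -/

/-- Rayleigh-quotient definition of the largest eigenvalue of a symmetric matrix. -/
def lamMax {n : ℕ} (M : Matrix (Fin n) (Fin n) ℝ) : ℝ :=
  ⨆ x : {x : Fin n → ℝ // x ⬝ᵥ x = 1}, x.1 ⬝ᵥ M.mulVec x.1

/-- Rayleigh-quotient definition of the smallest eigenvalue of a symmetric matrix. -/
def lamMin {n : ℕ} (M : Matrix (Fin n) (Fin n) ℝ) : ℝ :=
  ⨅ x : {x : Fin n → ℝ // x ⬝ᵥ x = 1}, x.1 ⬝ᵥ M.mulVec x.1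

/-- Spectral norm (the operator norm induced by the Euclidean norm). -/
def specNorm {p q : ℕ} (M : Matrix (Fin p) (Fin q) ℝ) : ℝ :=
  Real.sqrt (lamMax (Mᵀ * M))

variable {n m : ℕ}

/-- `R(P) = BᵀPB + σ²·B̄ᵀPB̄`. -/
def Rop (σ : ℝ) (B Bbar : Matrix (Fin n) (Fin m) ℝ) (P : Matrix (Fin n) (Fin n) ℝ) :
    Matrix (Fin m) (Fin m) ℝ :=
  Bᵀ * P * B + σ ^ 2 • (Bbarᵀ * P * Bbar)

/-- `S(P) = AᵀPB + σ²·ĀᵀPB̄`. -/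
def Sop (σ : ℝ) (A Abar : Matrix (Fin n) (Fin n) ℝ) (B Bbar : Matrix (Fin n) (Fin m) ℝ)
    (P : Matrix (Fin n) (Fin n) ℝ) : Matrix (Fin n) (Fin m) ℝ :=
  Aᵀ * P * B + σ ^ 2 • (Abarᵀ * P * Bbar)

/-- `Φ(P) = AᵀPA + σ²·ĀᵀPĀ − S(P)·R(P)⁻¹·S(P)ᵀ`. -/
def Phi (σ : ℝ) (A Abar : Matrix (Fin n) (Fin n) ℝ) (B Bbar : Matrix (Fin n) (Fin m) ℝ)
    (P : Matrix (Fin n) (Fin n) ℝ) : Matrix (Fin n) (Fin n) ℝ :=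
  Aᵀ * P * A + σ ^ 2 • (Abarᵀ * P * Abar)
    - Sop σ A Abar B Bbar P * (Rop σ B Bbar P)⁻¹ * (Sop σ A Abar B Bbar P)ᵀ

/-- `K(P) = R(P)⁻¹·S(P)ᵀ`. -/
def Kgain (σ : ℝ) (A Abar : Matrix (Fin n) (Fin n) ℝ) (B Bbar : Matrix (Fin n) (Fin m) ℝ)
    (P : Matrix (Fin n) (Fin n) ℝ) : Matrix (Fin m) (Fin n) ℝ :=
  (Rop σ B Bbar P)⁻¹ * (Sop σ A Abar B Bbar P)ᵀ

/-- `C_A = λ_max(AAᵀ + σ²·ĀĀᵀ)`. -/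
def CA (σ : ℝ) (A Abar : Matrix (Fin n) (Fin n) ℝ) : ℝ :=
  lamMax (A * Aᵀ + σ ^ 2 • (Abar * Abarᵀ))

/-- `δ_τ = (τ/n)/((1−τ)·C_A + τ)`. -/
def deltaTau (σ : ℝ) (A Abar : Matrix (Fin n) (Fin n) ℝ) (τ : ℝ) : ℝ :=
  (τ / (n : ℝ)) / ((1 - τ) * CA σ A Abar + τ)

/-- The regularized normalized operator
`Φ̂_τ(P) = ((1−τ)·Φ(P) + (τ/n)·I) / Tr((1−τ)·Φ(P) + (τ/n)·I)`. -/
def PhiHat (σ : ℝ) (A Abar : Matrix (Fin n) (Fin n) ℝ) (B Bbar : Matrix (Fin n) (Fin m) ℝ)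
    (τ : ℝ) (P : Matrix (Fin n) (Fin n) ℝ) : Matrix (Fin n) (Fin n) ℝ :=
  (Matrix.trace ((1 - τ) • Phi σ A Abar B Bbar P
      + (τ / (n : ℝ)) • (1 : Matrix (Fin n) (Fin n) ℝ)))⁻¹ •
    ((1 - τ) • Phi σ A Abar B Bbar P + (τ / (n : ℝ)) • (1 : Matrix (Fin n) (Fin n) ℝ))

/-- Inverse of the positive-semidefinite square root (junk value `0` off the PSD cone),
so `invSqrt P = P^{−1/2}` for positive definite `P`. -/
def invSqrt {n : ℕ} (P : Matrix (Fin n) (Fin n) ℝ) : Matrix (Fin n) (Fin n) ℝ :=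
  if h : P.PosSemidef then
    ((h.1.eigenvectorUnitary : Matrix (Fin n) (Fin n) ℝ) *
      diagonal ((↑) ∘ (√·) ∘ h.1.eigenvalues) *
      (star h.1.eigenvectorUnitary : Matrix (Fin n) (Fin n) ℝ))⁻¹ else 0

/-- `L(P) = λ_min(P^{−1/2}·Φ(P)·P^{−1/2})`. -/
def Lval (σ : ℝ) (A Abar : Matrix (Fin n) (Fin n) ℝ) (B Bbar : Matrix (Fin n) (Fin m) ℝ)
    (P : Matrix (Fin n) (Fin n) ℝ) : ℝ :=
  lamMin (invSqrt P * Phi σ A Abar B Bbar P * invSqrt P)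

/-- `U(P) = λ_max(P^{−1/2}·Φ(P)·P^{−1/2})`. -/
def Uval (σ : ℝ) (A Abar : Matrix (Fin n) (Fin n) ℝ) (B Bbar : Matrix (Fin n) (Fin m) ℝ)
    (P : Matrix (Fin n) (Fin n) ℝ) : ℝ :=
  lamMax (invSqrt P * Phi σ A Abar B Bbar P * invSqrt P)

/-- The trace-normalized slice `S_a = {X symmetric : X ⪰ a·I, Tr X = 1}`. -/
def Slice (a : ℝ) : Set (Matrix (Fin n) (Fin n) ℝ) :=
  {X | X.IsSymm ∧ (X - a • (1 : Matrix (Fin n) (Fin n) ℝ)).PosSemidef ∧ X.trace = 1}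

/-- `α_A = ‖A‖² + σ²·‖Ā‖²` (spectral norms). -/
def alphaA (σ : ℝ) (A Abar : Matrix (Fin n) (Fin n) ℝ) : ℝ :=
  specNorm A ^ 2 + σ ^ 2 * specNorm Abar ^ 2

/-- `α_S = ‖A‖·‖B‖ + σ²·‖Ā‖·‖B̄‖`. -/
def alphaS (σ : ℝ) (A Abar : Matrix (Fin n) (Fin n) ℝ) (B Bbar : Matrix (Fin n) (Fin m) ℝ) : ℝ :=
  specNorm A * specNorm B + σ ^ 2 * specNorm Abar * specNorm Bbar

/-- `α_R = ‖B‖² + σ²·‖B̄‖²`. -/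
def alphaR (σ : ℝ) (B Bbar : Matrix (Fin n) (Fin m) ℝ) : ℝ :=
  specNorm B ^ 2 + σ ^ 2 * specNorm Bbar ^ 2

/-- `c_R(a) = 1/(a·λ_min(R₀))`. -/
def cR (σ : ℝ) (B Bbar : Matrix (Fin n) (Fin m) ℝ) (a : ℝ) : ℝ :=
  1 / (a * lamMin (Bᵀ * B + σ ^ 2 • (Bbarᵀ * Bbar)))

/-- `L_Φ(a) = α_A + 2·α_S²·c_R(a) + α_S²·α_R·c_R(a)²`. -/
def LPhi (σ : ℝ) (A Abar : Matrix (Fin n) (Fin n) ℝ) (B Bbar : Matrix (Fin n) (Fin m) ℝ)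
    (a : ℝ) : ℝ :=
  alphaA σ A Abar + 2 * alphaS σ A Abar B Bbar ^ 2 * cR σ B Bbar a
    + alphaS σ A Abar B Bbar ^ 2 * alphaR σ B Bbar * cR σ B Bbar a ^ 2

/-- `C_Φ(a) = α_A + α_S²·c_R(a)`. -/
def CPhi (σ : ℝ) (A Abar : Matrix (Fin n) (Fin n) ℝ) (B Bbar : Matrix (Fin n) (Fin m) ℝ)
    (a : ℝ) : ℝ :=
  alphaA σ A Abar + alphaS σ A Abar B Bbar ^ 2 * cR σ B Bbar a

/-- The contraction modulus `Λ(τ)`. -/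
def LambdaTau (σ : ℝ) (A Abar : Matrix (Fin n) (Fin n) ℝ) (B Bbar : Matrix (Fin n) (Fin m) ℝ)
    (τ : ℝ) : ℝ :=
  (1 - τ) * LPhi σ A Abar B Bbar (deltaTau σ A Abar τ) / τ
    + (1 - τ) * ((1 - τ) * CPhi σ A Abar B Bbar (deltaTau σ A Abar τ) + τ / (n : ℝ))
        * (n : ℝ) * LPhi σ A Abar B Bbar (deltaTau σ A Abar τ) / τ ^ 2

/-- The directional derivative `DΦ(P)[H]`. -/
def DPhi (σ : ℝ) (A Abar : Matrix (Fin n) (Fin n) ℝ) (B Bbar : Matrix (Fin n) (Fin m) ℝ)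
    (P H : Matrix (Fin n) (Fin n) ℝ) : Matrix (Fin n) (Fin n) ℝ :=
  Aᵀ * H * A + σ ^ 2 • (Abarᵀ * H * Abar)
    - (Aᵀ * H * B + σ ^ 2 • (Abarᵀ * H * Bbar)) * (Rop σ B Bbar P)⁻¹ * (Sop σ A Abar B Bbar P)ᵀ
    - Sop σ A Abar B Bbar P * (Rop σ B Bbar P)⁻¹ * (Bᵀ * H * A + σ ^ 2 • (Bbarᵀ * H * Abar))
    + Sop σ A Abar B Bbar P * (Rop σ B Bbar P)⁻¹ * (Bᵀ * H * B + σ ^ 2 • (Bbarᵀ * H * Bbar))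
        * (Rop σ B Bbar P)⁻¹ * (Sop σ A Abar B Bbar P)ᵀ

/-- `s_τ(P) = Tr((1−τ)·Φ(P) + (τ/n)·I)`. -/
def sTau (σ : ℝ) (A Abar : Matrix (Fin n) (Fin n) ℝ) (B Bbar : Matrix (Fin n) (Fin m) ℝ)
    (τ : ℝ) (P : Matrix (Fin n) (Fin n) ℝ) : ℝ :=
  Matrix.trace ((1 - τ) • Phi σ A Abar B Bbar P + (τ / (n : ℝ)) • (1 : Matrix (Fin n) (Fin n) ℝ))

/-- The directional derivative
`DΦ̂_τ(P)[H] = ((1−τ)/s_τ(P))·(DΦ(P)[H] − Φ̂_τ(P)·Tr(DΦ(P)[H]))`. -/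
def DPhiHat (σ : ℝ) (A Abar : Matrix (Fin n) (Fin n) ℝ) (B Bbar : Matrix (Fin n) (Fin m) ℝ)
    (τ : ℝ) (P H : Matrix (Fin n) (Fin n) ℝ) : Matrix (Fin n) (Fin n) ℝ :=
  ((1 - τ) / sTau σ A Abar B Bbar τ P) •
    (DPhi σ A Abar B Bbar P H
      - Matrix.trace (DPhi σ A Abar B Bbar P H) • PhiHat σ A Abar B Bbar τ P)

/-- The local Lipschitz modulus `Lip(P,τ) = sup{‖DΦ̂_τ(P)[H]‖ : H symmetric, ‖H‖ = 1}`. -/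
def LipMod (σ : ℝ) (A Abar : Matrix (Fin n) (Fin n) ℝ) (B Bbar : Matrix (Fin n) (Fin m) ℝ)
    (τ : ℝ) (P : Matrix (Fin n) (Fin n) ℝ) : ℝ :=
  ⨆ H : {H : Matrix (Fin n) (Fin n) ℝ // H.IsSymm ∧ specNorm H = 1},
    specNorm (DPhiHat σ A Abar B Bbar τ P H.1)

/-! ### Probabilistic definitions -/

/-- The Gaussian measure on `ℝ` with mean `0` and variance `σ²`. -/
def gauss (σ : ℝ) : Measure ℝ := gaussianReal 0 ⟨σ ^ 2, sq_nonneg σ⟩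

/-- The Gaussian expectation `E_ω[((A+Āω)x + (B+B̄ω)v)ᵀ·P·((A+Āω)x + (B+B̄ω)v)]`. -/
def qform (σ : ℝ) (A Abar : Matrix (Fin n) (Fin n) ℝ) (B Bbar : Matrix (Fin n) (Fin m) ℝ)
    (P : Matrix (Fin n) (Fin n) ℝ) (x : Fin n → ℝ) (v : Fin m → ℝ) : ℝ :=
  ∫ s, (((A + s • Abar).mulVec x + (B + s • Bbar).mulVec v) ⬝ᵥ
      P.mulVec ((A + s • Abar).mulVec x + (B + s • Bbar).mulVec v)) ∂(gauss σ)

/-- The data of the stochastic control system: a probability space `(Ω, F, Pr)`,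
system matrices `A, Ā, B, B̄`, a noise level `σ > 0`, an i.i.d. sequence `w` of
Gaussian random variables with mean `0` and variance `σ²`, and a sub-σ-algebra `G`
independent of the noise. -/
structure Ctx (n m : ℕ) (Ω : Type) [mΩ : MeasurableSpace Ω] where
  Pr : Measure Ω
  isProb : IsProbabilityMeasure Pr
  σ : ℝ
  hσ : 0 < σ
  A : Matrix (Fin n) (Fin n) ℝ
  Abar : Matrix (Fin n) (Fin n) ℝ
  B : Matrix (Fin n) (Fin m) ℝ
  Bbar : Matrix (Fin n) (Fin m) ℝ
  w : ℕ → Ω → ℝ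
  hw_meas : ∀ k, Measurable (w k)
  hw_gauss : ∀ k, Pr.map (w k) = gauss σ
  hw_iid : iIndepFun w Pr
  G : MeasurableSpace Ω
  hG : G ≤ mΩ
  hw_indep_G : Indep (⨆ k, MeasurableSpace.comap (w k) inferInstance) G Pr

variable {Ω : Type} [MeasurableSpace Ω]

/-- The filtration `F_k = G ∨ σ(ω₀, …, ω_{k−1})`. -/
def Ctx.Fk (C : Ctx n m Ω) (k : ℕ) : MeasurableSpace Ω :=
  C.G ⊔ ⨆ i ∈ Finset.range k, MeasurableSpace.comap (C.w i) inferInstance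

/-- Admissible policies: `u_k` is `F_k`-measurable and square-integrable. -/
def Ctx.Admissible (C : Ctx n m Ω) (u : ℕ → Ω → Fin m → ℝ) : Prop :=
  ∀ k, Measurable[C.Fk k] (u k) ∧ MemLp (u k) 2 C.Pr

/-- Admissible initial states: `G`-measurable and square-integrable. -/
def Ctx.InitOK (C : Ctx n m Ω) (x : Ω → Fin n → ℝ) : Prop :=
  Measurable[C.G] x ∧ MemLp x 2 C.Pr

/-- The state trajectory `x_{k+1} = (A + Ā·ω_k)x_k + (B + B̄·ω_k)u_k`. -/
def Ctx.traj (C : Ctx n m Ω) (x0 : Ω → Fin n → ℝ) (u : ℕ → Ω → Fin m → ℝ) :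
    ℕ → Ω → Fin n → ℝ
  | 0 => x0
  | k + 1 => fun s =>
      (C.A + C.w k s • C.Abar).mulVec (C.traj x0 u k s)
      + (C.B + C.w k s • C.Bbar).mulVec (u k s)

/-- `E[xᵀx]`. -/
def msSq {n : ℕ} (Pr : Measure Ω) (x : Ω → Fin n → ℝ) : ℝ := ∫ s, x s ⬝ᵥ x s ∂Pr

/-- The mean-square norm `‖x‖_ms = (E[xᵀx])^{1/2}`. -/
def msNorm {n : ℕ} (Pr : Measure Ω) (x : Ω → Fin n → ℝ) : ℝ := Real.sqrt (msSq Pr x)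

/-- The mean-square stabilizing rate `ρ(u)` of a policy. -/
def Ctx.rate (C : Ctx n m Ω) (u : ℕ → Ω → Fin m → ℝ) : ℝ :=
  sInf {ρ : ℝ | 0 ≤ ρ ∧ ∃ κ : ℝ, 0 ≤ κ ∧ ∀ x0, C.InitOK x0 → ∀ k : ℕ,
    msSq C.Pr (C.traj x0 u k) ≤ κ * ρ ^ (2 * k) * msSq C.Pr x0}

/-- The optimal stabilizing rate `ρ* = inf_{u ∈ U} ρ(u)`. -/
def Ctx.rhoStar (C : Ctx n m Ω) : ℝ :=
  sInf {r : ℝ | ∃ u, C.Admissible u ∧ r = C.rate u}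

/-- `η(x) = inf_{u ∈ U} sup_{k ∈ ℕ} ‖x_k‖_ms/(ρ*)^k` (with values in `[0,∞]`). -/
def Ctx.eta (C : Ctx n m Ω) (x : Ω → Fin n → ℝ) : ℝ≥0∞ :=
  ⨅ (u : ℕ → Ω → Fin m → ℝ) (_ : C.Admissible u),
    ⨆ k : ℕ, ENNReal.ofReal (msNorm C.Pr (C.traj x u k) / C.rhoStar ^ k)

/-- The per-trajectory mean-square stabilizing rate `ρ(u; x₀)`. -/
def Ctx.rateAt (C : Ctx n m Ω) (x0 : Ω → Fin n → ℝ) (u : ℕ → Ω → Fin m → ℝ) : ℝ :=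
  sInf {ρ : ℝ | 0 ≤ ρ ∧ ∃ κ : ℝ, 0 ≤ κ ∧ ∀ k : ℕ,
    msSq C.Pr (C.traj x0 u k) ≤ κ * ρ ^ (2 * k) * msSq C.Pr x0}

/-- The cost `J(x₀,u) = limsup_k (1/k)·log(E[x_kᵀx_k]/E[x₀ᵀx₀])`. -/
def Ctx.J (C : Ctx n m Ω) (x0 : Ω → Fin n → ℝ) (u : ℕ → Ω → Fin m → ℝ) : ℝ :=
  Filter.limsup
    (fun k : ℕ => (1 / (k : ℝ)) * Real.log (msSq C.Pr (C.traj x0 u k) / msSq C.Pr x0))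
    Filter.atTop

/-- Feedback policies: `u_k = μ_k(x_k)` for Borel-measurable `μ_k`. -/
def Ctx.IsFeedback (C : Ctx n m Ω) (x0 : Ω → Fin n → ℝ) (u : ℕ → Ω → Fin m → ℝ) : Prop :=
  ∃ μ : ℕ → (Fin n → ℝ) → Fin m → ℝ, (∀ k, Measurable (μ k)) ∧
    ∀ k s, u k s = μ k (C.traj x0 u k s)

/-- The closed-loop trajectory under a stationary feedback law `μ`. -/
def Ctx.fbTraj (C : Ctx n m Ω) (x0 : Ω → Fin n → ℝ) (μ : (Fin n → ℝ) → Fin m → ℝ) :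
    ℕ → Ω → Fin n → ℝ
  | 0 => x0
  | k + 1 => fun s =>
      (C.A + C.w k s • C.Abar).mulVec (C.fbTraj x0 μ k s)
      + (C.B + C.w k s • C.Bbar).mulVec (μ (C.fbTraj x0 μ k s))

/-- The stationary policy `u* given by `u*_k = μ(x*_k)` along its own closed-loop
trajectory, for a stationary feedback law `μ`. -/
def Ctx.fbPolicy (C : Ctx n m Ω) (x0 : Ω → Fin n → ℝ) (μ : (Fin n → ℝ) → Fin m → ℝ) :
    ℕ → Ω → Fin m → ℝ :=
  fun k s => μ (C.fbTraj x0 μ k s)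

/-- The linear feedback policy `u*_k = −K·x*_k` along its own trajectory. -/
def Ctx.linFbPolicy (C : Ctx n m Ω) (x0 : Ω → Fin n → ℝ) (K : Matrix (Fin m) (Fin n) ℝ) :
    ℕ → Ω → Fin m → ℝ :=
  C.fbPolicy x0 (fun x => -(K.mulVec x))

/-- `ξ_♯(x) = inf_{v ∈ ℝ^m} ‖(A + Ā·ω)x + (B + B̄·ω)v‖_ms`, realized with `ω = ω₀`. -/
def Ctx.xiSharp (C : Ctx n m Ω) (x : Ω → Fin n → ℝ) : ℝ :=
  ⨅ v : Fin m → ℝ, msNorm C.Pr (fun s =>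
    (C.A + C.w 0 s • C.Abar).mulVec (x s) + (C.B + C.w 0 s • C.Bbar).mulVec v)

/-- Extended-real logarithm: `log t` for `t > 0` and `−∞` for `t ≤ 0`. -/
def elog (t : ℝ) : EReal := if t ≤ 0 then ⊥ else ((Real.log t : ℝ) : EReal)

/-- The cost `J(x₀,u)` interpreted with values in `[−∞,∞]`. -/
def Ctx.Je (C : Ctx n m Ω) (x0 : Ω → Fin n → ℝ) (u : ℕ → Ω → Fin m → ℝ) : EReal :=
  Filter.limsup
    (fun k : ℕ => ((1 / (k : ℝ) : ℝ) : EReal) * elog (msSq C.Pr (C.traj x0 u k) / msSq C.Pr x0))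
    Filter.atTop


/-! Completing the square with the gain `K = R(P)⁻¹S(P)ᵀ` gives
`Φ(P) = (A - BK)ᵀP(A - BK) + σ²(Ā - B̄K)ᵀP(Ā - B̄K) ⪰ 0` and
`Tr Φ(P) ≤ Tr(AᵀPA + σ²ĀᵀPĀ) = Tr(P(AAᵀ + σ²ĀĀᵀ)) ≤ C_A · Tr P = C_A`.
So `(1−τ)Φ(P) + (τ/n)I ⪰ (τ/n)I` has trace in `(0, (1−τ)C_A + τ]`, and dividing it by its
trace yields a matrix `⪰ δ_τ I` of trace one. -/

section RayleighQuotient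

variable {k : ℕ}

lemma bddAbove_rayleigh (M : Matrix (Fin k) (Fin k) ℝ) :
    BddAbove (Set.range fun x : {x : Fin k → ℝ // x ⬝ᵥ x = 1} => x.1 ⬝ᵥ M *ᵥ x.1) := by
  refine ⟨∑ i, ∑ j, |M i j|, ?_⟩
  rintro _ ⟨⟨x, hx⟩, rfl⟩
  have hx_le : ∀ i, |x i| ≤ 1 := fun i => abs_le_one_iff_mul_self_le_one.2 <| hx ▸
    Finset.single_le_sum (f := fun j => x j * x j) (fun j _ => mul_self_nonneg _)
      (Finset.mem_univ i)
  calc x ⬝ᵥ M *ᵥ x = ∑ i, ∑ j, x i * M i j * x j := by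
        simp only [dotProduct, mulVec, Finset.mul_sum, mul_assoc]
    _ ≤ ∑ i, ∑ j, |M i j| := by
        gcongr with i _ j _
        calc x i * M i j * x j ≤ |x i| * |M i j| * |x j| := by
              rw [← abs_mul, ← abs_mul]; exact le_abs_self _
          _ ≤ 1 * |M i j| * 1 := by gcongr <;> exact hx_le _
          _ = |M i j| := by ring

lemma dotProduct_mulVec_le_lamMax_mul (M : Matrix (Fin k) (Fin k) ℝ) (y : Fin k → ℝ) :
    y ⬝ᵥ M *ᵥ y ≤ lamMax M * (y ⬝ᵥ y) := by
  rcases (dotProduct_self_star_nonneg y).eq_or_lt with hyy | hyy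
  · simp [dotProduct_self_eq_zero.1 hyy.symm]
  set c := √(y ⬝ᵥ y)
  have hc : 0 < c := Real.sqrt_pos.2 hyy
  have hcc : c * c = y ⬝ᵥ y := Real.mul_self_sqrt hyy.le
  have hunit : c⁻¹ • y ⬝ᵥ c⁻¹ • y = 1 := by
    simp only [smul_dotProduct, dotProduct_smul, smul_eq_mul, ← hcc]
    field_simp
  have hle : c⁻¹ • y ⬝ᵥ M *ᵥ (c⁻¹ • y) ≤ lamMax M :=
    le_ciSup (bddAbove_rayleigh M) ⟨c⁻¹ • y, hunit⟩
  simp only [mulVec_smul, smul_dotProduct, dotProduct_smul, smul_eq_mul] at hle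
  rw [← hcc]
  field_simp at hle
  linarith

lemma lamMax_nonneg (hk : 0 < k) {M : Matrix (Fin k) (Fin k) ℝ} (hM : M.PosSemidef) :
    0 ≤ lamMax M := by
  let e : Fin k → ℝ := Pi.single ⟨0, hk⟩ 1
  have he : e ⬝ᵥ e = 1 := by simp [e]
  have he_nonneg : 0 ≤ e ⬝ᵥ M *ᵥ e := by simpa using hM.dotProduct_mulVec_nonneg e
  exact he_nonneg.trans (le_ciSup (bddAbove_rayleigh M) ⟨e, he⟩)

open scoped MatrixOrder in
lemma trace_mul_le_lamMax_mul_trace {P : Matrix (Fin k) (Fin k) ℝ} (hP : P.PosSemidef)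
    (M : Matrix (Fin k) (Fin k) ℝ) : (P * M).trace ≤ lamMax M * P.trace := by
  obtain ⟨Q, rfl⟩ := CStarAlgebra.nonneg_iff_eq_star_mul_self.mp hP.nonneg
  have htr : ∀ N : Matrix (Fin k) (Fin k) ℝ, (star Q * Q * N).trace = ∑ i, Q i ⬝ᵥ N *ᵥ Q i := by
    intro N
    rw [Matrix.mul_assoc, trace_mul_comm]
    simp [trace, mul_mul_apply, star_eq_conjTranspose]
  calc (star Q * Q * M).trace = ∑ i, Q i ⬝ᵥ M *ᵥ Q i := htr M
    _ ≤ ∑ i, lamMax M * (Q i ⬝ᵥ Q i) :=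
        Finset.sum_le_sum fun i _ => dotProduct_mulVec_le_lamMax_mul M (Q i)
    _ = lamMax M * (star Q * Q).trace := by
        rw [← Finset.mul_sum, ← Matrix.mul_one (star Q * Q), htr 1]
        simp

end RayleighQuotient

lemma _root_.Matrix.nonsing_inv_mul_mul_nonsing_inv {k α : Type*} [Fintype k] [DecidableEq k]
    [CommRing α] (R : Matrix k k α) : R⁻¹ * R * R⁻¹ = R⁻¹ := by
  by_cases h : IsUnit R.det
  · rw [nonsing_inv_mul R h, Matrix.one_mul]
  · rw [nonsing_inv_apply_not_isUnit R h, Matrix.zero_mul, Matrix.zero_mul]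

lemma _root_.Matrix.PosSemidef.of_sub_smul_one {k : Type*} [Fintype k] [DecidableEq k]
    {X : Matrix k k ℝ} {a : ℝ} (ha : 0 ≤ a) (h : (X - a • 1).PosSemidef) : X.PosSemidef := by
  simpa using h.add (PosSemidef.one.smul ha)

lemma _root_.Matrix.PosSemidef.inv_trace_smul_sub {k : Type*} [Fintype k] [DecidableEq k]
    {M : Matrix k k ℝ} {a b : ℝ} (ha : 0 ≤ a) (hM : (M - a • 1).PosSemidef)
    (htr : 0 < M.trace) (hb : M.trace ≤ b) : (M.trace⁻¹ • M - (a / b) • 1).PosSemidef := by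
  have hsplit : M.trace⁻¹ • M - (a / b) • 1
      = M.trace⁻¹ • (M - a • 1) + (a / M.trace - a / b) • 1 := by
    rw [smul_sub, smul_smul, div_eq_inv_mul a M.trace]
    module
  rw [hsplit]
  exact (hM.smul (inv_nonneg.2 htr.le)).add
    (PosSemidef.one.smul (sub_nonneg.2 (div_le_div_of_nonneg_left ha htr hb)))

lemma _root_.Matrix.PosSemidef.transpose_mul_mul_same {k l : Type*} [Fintype k] [Fintype l]
    {P : Matrix k k ℝ} (hP : P.PosSemidef) (M : Matrix k l ℝ) : (Mᵀ * P * M).PosSemidef := by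
  simpa only [conjTranspose_eq_transpose_of_trivial] using hP.conjTranspose_mul_mul_same M

lemma _root_.Matrix.PosSemidef.isSymm {k : Type*} [Fintype k] {P : Matrix k k ℝ}
    (hP : P.PosSemidef) : P.IsSymm :=
  isHermitian_iff_isSymm.1 hP.isHermitian

section Riccati

variable (σ : ℝ) (A Abar : Matrix (Fin n) (Fin n) ℝ) (B Bbar : Matrix (Fin n) (Fin m) ℝ)
  {P : Matrix (Fin n) (Fin n) ℝ}

lemma Rop_isSymm (hP : P.IsSymm) : (Rop σ B Bbar P).IsSymm := by
  simp only [IsSymm, Rop, transpose_add, transpose_smul, transpose_mul, transpose_transpose,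
    hP.eq, Matrix.mul_assoc]

lemma Rop_posSemidef (hP : P.PosSemidef) : (Rop σ B Bbar P).PosSemidef :=
  (hP.transpose_mul_mul_same B).add ((hP.transpose_mul_mul_same Bbar).smul (sq_nonneg σ))

lemma Sop_mul_inv_Rop_mul_transpose (hP : P.IsSymm) :
    Sop σ A Abar B Bbar P * (Rop σ B Bbar P)⁻¹ * (Sop σ A Abar B Bbar P)ᵀ
      = (Kgain σ A Abar B Bbar P)ᵀ * Rop σ B Bbar P * Kgain σ A Abar B Bbar P := by
  rw [Kgain]
  set S := Sop σ A Abar B Bbar P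
  set R := Rop σ B Bbar P
  have hR : Rᵀ = R := Rop_isSymm σ B Bbar hP
  rw [transpose_mul, transpose_transpose, transpose_nonsing_inv, hR, ← Matrix.mul_assoc,
    Matrix.mul_assoc S R⁻¹ R, Matrix.mul_assoc S (R⁻¹ * R), nonsing_inv_mul_mul_nonsing_inv]

lemma Phi_eq_closedLoop (hP : P.IsSymm) :
    Phi σ A Abar B Bbar P
      = (A - B * Kgain σ A Abar B Bbar P)ᵀ * P * (A - B * Kgain σ A Abar B Bbar P)
        + σ ^ 2 • ((Abar - Bbar * Kgain σ A Abar B Bbar P)ᵀ * P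
          * (Abar - Bbar * Kgain σ A Abar B Bbar P)) := by
  set K := Kgain σ A Abar B Bbar P
  set S := Sop σ A Abar B Bbar P
  set R := Rop σ B Bbar P
  have hR : Rᵀ = R := Rop_isSymm σ B Bbar hP
  have hSRS : S * R⁻¹ * Sᵀ = Kᵀ * R * K := Sop_mul_inv_Rop_mul_transpose σ A Abar B Bbar hP
  have hSK : S * K = Kᵀ * R * K := by rw [← hSRS, Matrix.mul_assoc]; rfl
  have hKS : Kᵀ * Sᵀ = Kᵀ * R * K := by
    rw [← transpose_mul, hSK, transpose_mul, transpose_mul, hR, transpose_transpose,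
      Matrix.mul_assoc]
  have hexpand : (A - B * K)ᵀ * P * (A - B * K)
        + σ ^ 2 • ((Abar - Bbar * K)ᵀ * P * (Abar - Bbar * K))
      = Aᵀ * P * A + σ ^ 2 • (Abarᵀ * P * Abar) - S * K - Kᵀ * Sᵀ + Kᵀ * R * K := by
    simp only [S, R, Sop, Rop, transpose_sub, transpose_add, transpose_smul, transpose_mul,
      transpose_transpose, Matrix.sub_mul, Matrix.mul_sub, Matrix.add_mul, Matrix.mul_add,
      Matrix.smul_mul, Matrix.mul_smul, smul_sub, Matrix.mul_assoc, hP.eq]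
    module
  rw [hexpand, hSK, hKS, Phi, hSRS]
  abel

lemma Phi_posSemidef (hP : P.PosSemidef) : (Phi σ A Abar B Bbar P).PosSemidef := by
  rw [Phi_eq_closedLoop σ A Abar B Bbar hP.isSymm]
  exact (hP.transpose_mul_mul_same _).add ((hP.transpose_mul_mul_same _).smul (sq_nonneg σ))

lemma trace_Phi_le (hP : P.PosSemidef) :
    (Phi σ A Abar B Bbar P).trace ≤ lamMax (A * Aᵀ + σ ^ 2 • (Abar * Abarᵀ)) * P.trace := by
  have hgain :
      0 ≤ (Sop σ A Abar B Bbar P * (Rop σ B Bbar P)⁻¹ * (Sop σ A Abar B Bbar P)ᵀ).trace := by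
    rw [Sop_mul_inv_Rop_mul_transpose σ A Abar B Bbar hP.isSymm]
    exact ((Rop_posSemidef σ B Bbar hP).transpose_mul_mul_same _).trace_nonneg
  have hcycle : (Aᵀ * P * A + σ ^ 2 • (Abarᵀ * P * Abar)).trace
      = (P * (A * Aᵀ + σ ^ 2 • (Abar * Abarᵀ))).trace := by
    simp only [trace_add, trace_smul, Matrix.mul_add, Matrix.mul_smul]
    rw [trace_mul_cycle, trace_mul_comm, trace_mul_cycle Abarᵀ, trace_mul_comm (Abar * Abarᵀ)]
  calc (Phi σ A Abar B Bbar P).trace ≤ (Aᵀ * P * A + σ ^ 2 • (Abarᵀ * P * Abar)).trace := by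
        rw [Phi, trace_sub]; linarith
    _ ≤ _ := hcycle ▸ trace_mul_le_lamMax_mul_trace hP _

end Riccati

theorem phiHat_self_map_general {n m : ℕ} (hn : 0 < n)
    (σ : ℝ)
    (A Abar : Matrix (Fin n) (Fin n) ℝ) (B Bbar : Matrix (Fin n) (Fin m) ℝ)
    (τ : ℝ) (hτ : τ ∈ Set.Ioo (0 : ℝ) 1) :
    ∀ P : Matrix (Fin n) (Fin n) ℝ, P ∈ Slice (deltaTau σ A Abar τ) →
      Matrix.trace (Phi σ A Abar B Bbar P) ≤ CA σ A Abar ∧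
      ((1 - τ) • Phi σ A Abar B Bbar P
          + (τ / (n : ℝ)) • (1 : Matrix (Fin n) (Fin n) ℝ)
          - (τ / (n : ℝ)) • (1 : Matrix (Fin n) (Fin n) ℝ)).PosSemidef ∧
      Matrix.trace ((1 - τ) • Phi σ A Abar B Bbar P
          + (τ / (n : ℝ)) • (1 : Matrix (Fin n) (Fin n) ℝ)) ≤ (1 - τ) * CA σ A Abar + τ ∧
      (PhiHat σ A Abar B Bbar τ P
          - deltaTau σ A Abar τ • (1 : Matrix (Fin n) (Fin n) ℝ)).PosSemidef ∧
      Matrix.trace (PhiHat σ A Abar B Bbar τ P) = 1 ∧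
      PhiHat σ A Abar B Bbar τ P ∈ Slice (deltaTau σ A Abar τ) := by
  rintro P ⟨-, hPδ, hPtr⟩
  obtain ⟨hτ0, hτ1⟩ := hτ
  have hCA : 0 ≤ CA σ A Abar := lamMax_nonneg hn <| by
    simpa using (PosSemidef.one.transpose_mul_mul_same Aᵀ).add
      ((PosSemidef.one.transpose_mul_mul_same Abarᵀ).smul (sq_nonneg σ))
  have hδ : 0 ≤ deltaTau σ A Abar τ := by unfold deltaTau; positivity
  have hP : P.PosSemidef := hPδ.of_sub_smul_one hδ
  have hΦ := Phi_posSemidef σ A Abar B Bbar hP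
  have htrΦ : (Phi σ A Abar B Bbar P).trace ≤ CA σ A Abar := by
    simpa [hPtr, CA] using trace_Phi_le σ A Abar B Bbar hP
  set M := (1 - τ) • Phi σ A Abar B Bbar P + (τ / (n : ℝ)) • (1 : Matrix (Fin n) (Fin n) ℝ)
  have hM : (M - (τ / (n : ℝ)) • 1).PosSemidef := by
    simpa [M] using hΦ.smul (sub_nonneg.2 hτ1.le)
  have htrM : M.trace = (1 - τ) * (Phi σ A Abar B Bbar P).trace + τ := by
    simp only [M, trace_add, trace_smul, smul_eq_mul, trace_one, Fintype.card_fin]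
    rw [div_mul_cancel₀ τ (by positivity)]
  have htrM_le : M.trace ≤ (1 - τ) * CA σ A Abar + τ := by
    rw [htrM]; gcongr
  have htrM_pos : 0 < M.trace := by
    rw [htrM]; exact add_pos_of_nonneg_of_pos (mul_nonneg (by linarith) hΦ.trace_nonneg) hτ0
  have hHat : (PhiHat σ A Abar B Bbar τ P - deltaTau σ A Abar τ • 1).PosSemidef :=
    hM.inv_trace_smul_sub (by positivity) htrM_pos htrM_le
  have hHat_tr : (PhiHat σ A Abar B Bbar τ P).trace = 1 := by
    rw [PhiHat, trace_smul, smul_eq_mul, inv_mul_cancel₀ htrM_pos.ne']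
  exact ⟨htrΦ, hM, htrM_le, hHat, hHat_tr, (hHat.of_sub_smul_one hδ).isSymm, hHat, hHat_tr⟩

/-- `Φ̂_τ` maps the slice `S_{δ_τ}` into itself: for
`P ∈ S_{δ_τ}`, `Tr Φ(P) ≤ C_A`, `(1−τ)Φ(P) + (τ/n)I ⪰ (τ/n)I` with trace at
most `(1−τ)·C_A + τ`, and consequently `Φ̂_τ(P) ⪰ δ_τ·I` with `Tr Φ̂_τ(P) = 1`. -/
theorem phiHat_self_map {n m : ℕ} (hn : 0 < n) (hm : 0 < m)
    (σ : ℝ) (hσ : 0 < σ)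
    (A Abar : Matrix (Fin n) (Fin n) ℝ) (B Bbar : Matrix (Fin n) (Fin m) ℝ)
    (hR0 : (Bᵀ * B + σ ^ 2 • (Bbarᵀ * Bbar)).PosDef)
    (τ : ℝ) (hτ : τ ∈ Set.Ioo (0 : ℝ) 1) :
    ∀ P : Matrix (Fin n) (Fin n) ℝ, P ∈ Slice (deltaTau σ A Abar τ) →
      Matrix.trace (Phi σ A Abar B Bbar P) ≤ CA σ A Abar ∧
      ((1 - τ) • Phi σ A Abar B Bbar P
          + (τ / (n : ℝ)) • (1 : Matrix (Fin n) (Fin n) ℝ)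
          - (τ / (n : ℝ)) • (1 : Matrix (Fin n) (Fin n) ℝ)).PosSemidef ∧
      Matrix.trace ((1 - τ) • Phi σ A Abar B Bbar P
          + (τ / (n : ℝ)) • (1 : Matrix (Fin n) (Fin n) ℝ)) ≤ (1 - τ) * CA σ A Abar + τ ∧
      (PhiHat σ A Abar B Bbar τ P
          - deltaTau σ A Abar τ • (1 : Matrix (Fin n) (Fin n) ℝ)).PosSemidef ∧
      Matrix.trace (PhiHat σ A Abar B Bbar τ P) = 1 ∧
      PhiHat σ A Abar B Bbar τ P ∈ Slice (deltaTau σ A Abar τ) :=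
  phiHat_self_map_general hn σ A Abar B Bbar τ hτ

end SCS
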